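/- arXiv:1608.00297 — 11 statements merged into one kernel-verified Lean document; each statement's English description precedes it below -/
import Mathlib

section
/- Let (A, B) be an X-mutation pair in C and suppose X is rigid, i.e. Hom_C(X₁, X₂⟦1⟧) = 0 for all objects X₁, X₂ of X. Then Hom_C(X', A⟦1⟧) = 0 for every object X' of X and every object A of A, and Hom_C(B, X'⟦1⟧) = 0 for every object B of B and every object X' of X. -/
/-!
Common definitions: the ideal of morphisms factoring through a subcategory `X`
(given as a set of objects of `C`), `X`-monic and `X`-epic morphisms, left and
right `X`-approximations, additive subcategories closed under isomorphisms,
direct sums and direct summands, and the additive quotient category `C/X`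
(realized via `CategoryTheory.Quotient` of the relation `xRel X`).
-/

open CategoryTheory Category Limits Pretriangulated

universe v u

namespace PaperStmt

variable {C : Type u} [Category.{v} C]

/-- `f` factors through an object of `X`. -/
def FactorsThru (X : Set C) {A B : C} (f : A ⟶ B) : Prop :=
  ∃ (M : C) (g : A ⟶ M) (h : M ⟶ B), M ∈ X ∧ g ≫ h = f

/-- `f : A ⟶ B` is `X`-monic: the map `Hom(B, X') → Hom(A, X')`, `g ↦ g ∘ f`,
is surjective for every object `X'` of `X`. -/
def IsXMonic (X : Set C) {A B : C} (f : A ⟶ B) : Prop :=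
  ∀ ⦃X' : C⦄, X' ∈ X → ∀ g : A ⟶ X', ∃ h : B ⟶ X', f ≫ h = g

/-- `f : A ⟶ B` is `X`-epic: the map `Hom(X', A) → Hom(X', B)`, `g ↦ f ∘ g`,
is surjective for every object `X'` of `X`. -/
def IsXEpic (X : Set C) {A B : C} (f : A ⟶ B) : Prop :=
  ∀ ⦃X' : C⦄, X' ∈ X → ∀ g : X' ⟶ B, ∃ h : X' ⟶ A, h ≫ f = g

/-- `α : A ⟶ X₀` is a left `X`-approximation of `A`: `X₀` lies in `X` and every
morphism from `A` to an object of `X` factors through `α`. -/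
def IsLeftApprox (X : Set C) {A X₀ : C} (α : A ⟶ X₀) : Prop :=
  X₀ ∈ X ∧ IsXMonic X α

/-- `β : X₀ ⟶ B` is a right `X`-approximation of `B`: `X₀` lies in `X` and every
morphism from an object of `X` to `B` factors through `β`. -/
def IsRightApprox (X : Set C) {X₀ B : C} (β : X₀ ⟶ B) : Prop :=
  X₀ ∈ X ∧ IsXEpic X β

/-- `X` is (the object class of) a full additive subcategory of `C`, closed
under isomorphisms, finite direct sums and direct summands. -/
structure IsAdditiveClosedSubcat [Preadditive C] [HasBinaryBiproducts C] (X : Set C) :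
    Prop where
  zero_mem : ∀ Z : C, IsZero Z → Z ∈ X
  iso_closed : ∀ {A B : C}, (A ≅ B) → A ∈ X → B ∈ X
  sum_closed : ∀ {A B : C}, A ∈ X → B ∈ X → (A ⊞ B) ∈ X
  summand_closed : ∀ {A B : C}, (A ⊞ B) ∈ X → A ∈ X

/-- Two morphisms are identified in the quotient category `C/X` precisely when
their difference factors through an object of `X`. -/
def xRel [Preadditive C] (X : Set C) : HomRel C :=
  fun _ _ f g => FactorsThru X (f - g)

section Triangulated

variable [Preadditive C] [HasZeroObject C] [HasShift C ℤ]
  [∀ n : ℤ, (shiftFunctor C n).Additive] [Pretriangulated C]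

/-- `(𝒜, ℬ)` is an `X`-mutation pair in the triangulated category `C`. -/
def IsMutationPair (X 𝒜 ℬ : Set C) : Prop :=
  X ⊆ 𝒜 ∧ X ⊆ ℬ ∧
  (∀ A ∈ 𝒜, ∃ (X₀ B' : C) (α : A ⟶ X₀) (β : X₀ ⟶ B') (δ : B' ⟶ A⟦(1 : ℤ)⟧),
      B' ∈ ℬ ∧ (Triangle.mk α β δ ∈ distTriang C) ∧
      IsLeftApprox X α ∧ IsRightApprox X β) ∧
  (∀ B ∈ ℬ, ∃ (A' X₀ : C) (α : A' ⟶ X₀) (β : X₀ ⟶ B) (δ : B ⟶ A'⟦(1 : ℤ)⟧),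
      A' ∈ 𝒜 ∧ (Triangle.mk α β δ ∈ distTriang C) ∧
      IsLeftApprox X α ∧ IsRightApprox X β)

end Triangulated

section Triangulated

variable [Preadditive C] [HasZeroObject C] [HasShift C ℤ]
  [∀ n : ℤ, (shiftFunctor C n).Additive] [Pretriangulated C]
  {X : Set C} {T : Triangle C}

theorem eq_zero_of_isXEpic_mor₂ (hT : T ∈ distTriang C) (hβ : IsXEpic X T.mor₂)
    {X' : C} (hX' : X' ∈ X) (f : X' ⟶ T.obj₁⟦(1 : ℤ)⟧) (hf : f ≫ T.mor₁⟦(1 : ℤ)⟧' = 0) :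
    f = 0 := by
  obtain ⟨g, rfl⟩ := Triangle.coyoneda_exact₁ T hT f hf
  obtain ⟨h, rfl⟩ := hβ hX' g
  rw [assoc, comp_distTriang_mor_zero₂₃ T hT, comp_zero]

theorem eq_zero_of_isXMonic_mor₁ (hT : T ∈ distTriang C) (hα : IsXMonic X T.mor₁)
    {X' : C} (hX' : X' ∈ X) (f : T.obj₃ ⟶ X'⟦(1 : ℤ)⟧) (hf : T.mor₂ ≫ f = 0) :
    f = 0 := by
  obtain ⟨g, rfl⟩ := Triangle.yoneda_exact₃ T hT f hf
  obtain ⟨k, hk⟩ := hα hX' ((shiftFunctor C (1 : ℤ)).preimage g)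
  rw [← (shiftFunctor C (1 : ℤ)).map_preimage g, ← hk, Functor.map_comp, ← assoc,
    comp_distTriang_mor_zero₃₁ T hT, zero_comp]

end Triangulated

/-- if `(𝒜, ℬ)` is an `X`-mutation pair and `X` is rigid
(`Hom(X₁, X₂⟦1⟧) = 0` for `X₁, X₂ ∈ X`), then `Hom(X', A⟦1⟧) = 0` for `X' ∈ X`,
`A ∈ 𝒜`, and `Hom(B, X'⟦1⟧) = 0` for `B ∈ ℬ`, `X' ∈ X`. -/
theorem statement0 [Preadditive C] [HasZeroObject C] [HasShift C ℤ]
    [∀ n : ℤ, (shiftFunctor C n).Additive] [Pretriangulated C] [HasBinaryBiproducts C]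
    (X 𝒜 ℬ : Set C) (hX : IsAdditiveClosedSubcat X)
    (hmut : IsMutationPair X 𝒜 ℬ)
    (hrigid : ∀ X₁ ∈ X, ∀ X₂ ∈ X, ∀ f : X₁ ⟶ (X₂⟦(1 : ℤ)⟧), f = 0) :
    (∀ X' ∈ X, ∀ A ∈ 𝒜, ∀ f : X' ⟶ (A⟦(1 : ℤ)⟧), f = 0) ∧
    (∀ B ∈ ℬ, ∀ X' ∈ X, ∀ f : B ⟶ (X'⟦(1 : ℤ)⟧), f = 0) := by
  obtain ⟨-, -, hleft, hright⟩ := hmut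
  constructor
  · intro X' hX' A hA f
    obtain ⟨X₀, _, α, β, δ, -, hT, ⟨hX₀, -⟩, ⟨-, hβ⟩⟩ := hleft A hA
    exact eq_zero_of_isXEpic_mor₂ (T := Triangle.mk α β δ) hT hβ hX' f
      (hrigid X' hX' X₀ hX₀ _)
  · intro B hB X' hX' f
    obtain ⟨_, X₀, α, β, δ, -, hT, ⟨-, hα⟩, ⟨hX₀, -⟩⟩ := hright B hB
    exact eq_zero_of_isXMonic_mor₁ (T := Triangle.mk α β δ) hT hα hX' f
      (hrigid X₀ hX₀ X' hX' _)

end PaperStmt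
end

section
/- Let (a, b, c) be a morphism of distinguished triangles from A --x--> B --y--> C --δ--> A⟦1⟧ to A' --x'--> X' --y'--> C' --δ'--> A'⟦1⟧ (so b ∘ x = x' ∘ a, c ∘ y = y' ∘ b, and a⟦1⟧ ∘ δ = δ' ∘ c), where the object X' lies in X and x is X-monic. If a factors through an object of X, then c factors through an object of X. -/
/-!
Common definitions: the ideal of morphisms factoring through a subcategory `X`
(given as a set of objects of `C`), `X`-monic and `X`-epic morphisms, left and
right `X`-approximations, additive subcategories closed under isomorphisms,
direct sums and direct summands, and the additive quotient category `C/X`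
(realized via `CategoryTheory.Quotient` of the relation `xRel X`).
-/

open CategoryTheory Category Limits Pretriangulated

universe v u

namespace PaperStmt

variable {C : Type u} [Category.{v} C]

/-- given a morphism `(a, b, c)` of distinguished triangles from
`A --x--> B --y--> Z --δ--> A⟦1⟧` to `A' --x'--> X' --y'--> Z' --δ'--> A'⟦1⟧`
with `X' ∈ X` and `x` `X`-monic, if `a` factors through an object of `X`, then
so does `c`. -/
theorem statement1 [Preadditive C] [HasZeroObject C] [HasShift C ℤ]
    [∀ n : ℤ, (shiftFunctor C n).Additive] [Pretriangulated C] [HasBinaryBiproducts C]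
    (X : Set C) (hX : IsAdditiveClosedSubcat X)
    {A B Z A' X' Z' : C}
    (x : A ⟶ B) (y : B ⟶ Z) (δ : Z ⟶ (A⟦(1 : ℤ)⟧))
    (x' : A' ⟶ X') (y' : X' ⟶ Z') (δ' : Z' ⟶ (A'⟦(1 : ℤ)⟧))
    (hT : Triangle.mk x y δ ∈ distTriang C)
    (hT' : Triangle.mk x' y' δ' ∈ distTriang C)
    (hX' : X' ∈ X) (hx : IsXMonic X x)
    (a : A ⟶ A') (b : B ⟶ X') (c : Z ⟶ Z')
    (hsq1 : x ≫ b = a ≫ x')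
    (hsq2 : y ≫ c = b ≫ y')
    (hsq3 : δ ≫ (a⟦(1 : ℤ)⟧') = c ≫ δ')
    (ha : FactorsThru X a) :
    FactorsThru X c := by
  obtain ⟨M, g, h, hM, hgh⟩ := ha
  obtain ⟨g', hg'⟩ := hx hM g
  have hcδ' : c ≫ δ' = 0 := by
    have h1 : δ ≫ (x⟦(1:ℤ)⟧') = 0 :=
      comp_distTriang_mor_zero₃₁ _ hT
    have : a⟦(1:ℤ)⟧' = x⟦(1:ℤ)⟧' ≫ (g' ≫ h)⟦(1:ℤ)⟧' := by
      rw [← Functor.map_comp, ← assoc, hg', hgh]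
    rw [← hsq3, this, ← assoc, h1, zero_comp]
  obtain ⟨k, hk⟩ := Triangle.coyoneda_exact₃ _ hT' c hcδ'
  exact ⟨X', k, y', hX', hk.symm⟩

end PaperStmt
end

section
/- Let A --x--> X₀ --y--> C --δ--> A⟦1⟧ and A --x'--> X₀' --y'--> C' --δ'--> A⟦1⟧ be distinguished triangles with X₀ and X₀' objects of X and with x and x' both left X-approximations of A. Then C and C' are isomorphic in the quotient category C/X. -/
/-!
Common definitions: the ideal of morphisms factoring through a subcategory `X`
(given as a set of objects of `C`), `X`-monic and `X`-epic morphisms, left and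
right `X`-approximations, additive subcategories closed under isomorphisms,
direct sums and direct summands, and the additive quotient category `C/X`
(realized via `CategoryTheory.Quotient` of the relation `xRel X`).
-/

open CategoryTheory Category Limits Pretriangulated

universe v u

namespace PaperStmt

variable {C : Type u} [Category.{v} C]

/-!
A factorisation `x' = x ≫ a` extends, by the axiom (TR3), to a morphism of triangles that is the
identity on `A`, giving `φ : Z ⟶ Z'` with `φ ≫ δ' = δ`; symmetrically `ψ : Z' ⟶ Z` with
`ψ ≫ δ = δ'`. Then `φ ≫ ψ - 𝟙` is killed by `δ`, so it factors through `y : X₀ ⟶ Z` and hence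
through `X₀ ∈ X`; likewise for `ψ ≫ φ - 𝟙`. So `φ` and `ψ` are mutually inverse in `C/X`.
-/

lemma quotient_map_comp_eq_id [Preadditive C] (X : Set C) {Z Z' : C} (φ : Z ⟶ Z') (ψ : Z' ⟶ Z)
    (h : xRel X (φ ≫ ψ) (𝟙 Z)) :
    (Quotient.functor (xRel X)).map φ ≫ (Quotient.functor (xRel X)).map ψ = 𝟙 _ := by
  simpa using CategoryTheory.Quotient.sound (xRel X) h

section

variable [Preadditive C] [HasZeroObject C] [HasShift C ℤ]
  [∀ n : ℤ, (shiftFunctor C n).Additive] [Pretriangulated C]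

lemma xRel_of_comp_mor₃_eq (X : Set C) {T : Triangle C} (hT : T ∈ distTriang C)
    (hT₂ : T.obj₂ ∈ X) {B : C} (f g : B ⟶ T.obj₃) (h : f ≫ T.mor₃ = g ≫ T.mor₃) :
    xRel X f g := by
  obtain ⟨r, hr⟩ := Triangle.coyoneda_exact₃ T hT (f - g)
    (by rw [Preadditive.sub_comp, h, sub_self])
  exact ⟨T.obj₂, r, T.mor₂, hT₂, hr.symm⟩

lemma exists_comp_mor₃_eq_of_factors {A X₀ X₀' Z Z' : C}
    {x : A ⟶ X₀} {y : X₀ ⟶ Z} {δ : Z ⟶ A⟦(1 : ℤ)⟧}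
    {x' : A ⟶ X₀'} {y' : X₀' ⟶ Z'} {δ' : Z' ⟶ A⟦(1 : ℤ)⟧}
    (hT : Triangle.mk x y δ ∈ distTriang C) (hT' : Triangle.mk x' y' δ' ∈ distTriang C)
    (a : X₀ ⟶ X₀') (ha : x ≫ a = x') :
    ∃ φ : Z ⟶ Z', φ ≫ δ' = δ := by
  obtain ⟨φ, -, hφ⟩ := complete_distinguished_triangle_morphism _ _ hT hT' (𝟙 A) a
    (ha.trans (id_comp x').symm)
  dsimp only [Triangle.mk] at hφ
  exact ⟨φ, by simpa using hφ.symm⟩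

end

/-- if `A --x--> X₀ --y--> Z --δ--> A⟦1⟧` and
`A --x'--> X₀' --y'--> Z' --δ'--> A⟦1⟧` are distinguished triangles with
`X₀, X₀' ∈ X` and `x, x'` left `X`-approximations of `A`, then `Z` and `Z'`
become isomorphic in the quotient category `C/X`. -/
theorem statement2 [Preadditive C] [HasZeroObject C] [HasShift C ℤ]
    [∀ n : ℤ, (shiftFunctor C n).Additive] [Pretriangulated C] [HasBinaryBiproducts C]
    (X : Set C) (hX : IsAdditiveClosedSubcat X)
    {A X₀ X₀' Z Z' : C}
    (x : A ⟶ X₀) (y : X₀ ⟶ Z) (δ : Z ⟶ (A⟦(1 : ℤ)⟧))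
    (x' : A ⟶ X₀') (y' : X₀' ⟶ Z') (δ' : Z' ⟶ (A⟦(1 : ℤ)⟧))
    (hT : Triangle.mk x y δ ∈ distTriang C)
    (hT' : Triangle.mk x' y' δ' ∈ distTriang C)
    (hx : IsLeftApprox X x) (hx' : IsLeftApprox X x') :
    Nonempty ((Quotient.functor (xRel X)).obj Z ≅ (Quotient.functor (xRel X)).obj Z') := by
  obtain ⟨a, ha⟩ := hx.2 hx'.1 x'
  obtain ⟨b, hb⟩ := hx'.2 hx.1 x
  obtain ⟨φ, hφ⟩ := exists_comp_mor₃_eq_of_factors hT hT' a ha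
  obtain ⟨ψ, hψ⟩ := exists_comp_mor₃_eq_of_factors hT' hT b hb
  refine ⟨⟨_, _, quotient_map_comp_eq_id X φ ψ ?_, quotient_map_comp_eq_id X ψ φ ?_⟩⟩
  · exact xRel_of_comp_mor₃_eq X hT hx.1 _ _
      (show (φ ≫ ψ) ≫ δ = 𝟙 Z ≫ δ by rw [assoc, hψ, hφ, id_comp])
  · exact xRel_of_comp_mor₃_eq X hT' hx'.1 _ _
      (show (ψ ≫ φ) ≫ δ' = 𝟙 Z' ≫ δ' by rw [assoc, hφ, hψ, id_comp])

end PaperStmt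
end

section
/- Let (A, B) be an X-mutation pair in C. Then the quotient categories A/X and B/X (the quotients of the full subcategories A and B by the ideal of morphisms factoring through objects of X) are equivalent; an equivalence G: A/X → B/X is given on objects by sending an object A of A to the third term B' of a distinguished triangle A → X₀ → B' → A⟦1⟧ whose first morphism is a left X-approximation and whose second morphism is a right X-approximation. -/
/-!
Common definitions: the ideal of morphisms factoring through a subcategory `X`
(given as a set of objects of `C`), `X`-monic and `X`-epic morphisms, left and
right `X`-approximations, additive subcategories closed under isomorphisms,
direct sums and direct summands, and the additive quotient category `C/X`
(realized via `CategoryTheory.Quotient` of the relation `xRel X`).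
-/

open CategoryTheory Category Limits Pretriangulated

universe v u

namespace PaperStmt

variable {C : Type u} [Category.{v} C]

/-- The ideal of morphisms factoring through `X`, on the full subcategory of `C`
with objects in `𝒜`; the quotient category `𝒜/X` is
`CategoryTheory.Quotient (subRel X 𝒜)`. -/
def subRel [Preadditive C] (X 𝒜 : Set C) : HomRel (ObjectProperty.FullSubcategory (· ∈ 𝒜)) :=
  fun a b f g => FactorsThru X ((f.hom : a.obj ⟶ b.obj) - (g.hom : a.obj ⟶ b.obj))

/-!
By the completion axiom, a morphism `f : A₁ ⟶ A₂` between the first terms of two triangles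
`Aᵢ → Xᵢ → Bᵢ → Aᵢ⟦1⟧` with `Aᵢ → Xᵢ` a left and `Xᵢ → Bᵢ` a right `X`-approximation extends to
some `h : B₁ ⟶ B₂` with `h ≫ δ₂ = δ₁ ≫ f⟦1⟧'` (the square closes because `A₁ → X₁` is a left
approximation), and dually every `h` arises from some `f`. Moreover `f` factors through `X` iff `h`
does: then `f` factors through `A₁ → X₁`, so `δ₁ ≫ f⟦1⟧' = 0`, so `h ≫ δ₂ = 0` and `h` factors
through `X₂ → B₂`; the converse is dual. Hence `A ↦ B` induces a well-defined, full and faithful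
functor `𝒜/X ⥤ ℬ/X`, which is essentially surjective because every object of `ℬ` is the third term
of such a triangle with first term in `𝒜`.
-/

section Factoring

variable {X : Set C}

lemma FactorsThru.comp_left {A B D : C} {f : B ⟶ D} (hf : FactorsThru X f) (g : A ⟶ B) :
    FactorsThru X (g ≫ f) := by
  obtain ⟨M, u, v, hM, rfl⟩ := hf
  exact ⟨M, g ≫ u, v, hM, assoc _ _ _⟩

lemma FactorsThru.comp_right {A B D : C} {f : A ⟶ B} (hf : FactorsThru X f) (g : B ⟶ D) :
    FactorsThru X (f ≫ g) := by
  obtain ⟨M, u, v, hM, rfl⟩ := hf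
  exact ⟨M, u, v ≫ g, hM, (assoc _ _ _).symm⟩

variable [Preadditive C]

lemma FactorsThru.neg {A B : C} {f : A ⟶ B} (hf : FactorsThru X f) : FactorsThru X (-f) := by
  obtain ⟨M, u, v, hM, rfl⟩ := hf
  exact ⟨M, u, -v, hM, Preadditive.comp_neg _ _⟩

variable [HasBinaryBiproducts C]

lemma FactorsThru.add (hX : IsAdditiveClosedSubcat X) {A B : C} {f g : A ⟶ B}
    (hf : FactorsThru X f) (hg : FactorsThru X g) : FactorsThru X (f + g) := by
  obtain ⟨M, u, v, hM, rfl⟩ := hf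
  obtain ⟨N, u', v', hN, rfl⟩ := hg
  exact ⟨M ⊞ N, biprod.lift u u', biprod.desc v v', hX.sum_closed hM hN, biprod.lift_desc⟩

open ZeroObject in
lemma FactorsThru.zero [HasZeroObject C] (hX : IsAdditiveClosedSubcat X) (A B : C) :
    FactorsThru X (0 : A ⟶ B) :=
  ⟨0, 0, 0, hX.zero_mem 0 (isZero_zero C), comp_zero⟩

open ObjectProperty in
lemma subRel_congruence [HasZeroObject C] (hX : IsAdditiveClosedSubcat X) (𝒜 : Set C) :
    Congruence (subRel X 𝒜) where
  equivalence :=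
    { refl := fun _ => by simpa [subRel] using FactorsThru.zero hX _ _
      symm := fun h => by simpa [subRel] using h.neg
      trans := fun h h' => by simpa [subRel] using h.add hX h' }
  comp_left f _ _ h := by
    simpa [subRel, FullSubcategory.comp_hom, ← Preadditive.comp_sub] using h.comp_left f.hom
  comp_right g h := by
    simpa [subRel, FullSubcategory.comp_hom, ← Preadditive.sub_comp] using h.comp_right g.hom

end Factoring

lemma subRel_functor_map_eq_iff [Preadditive C] [HasZeroObject C] [HasBinaryBiproducts C]
    {X : Set C} (hX : IsAdditiveClosedSubcat X) {𝒜 : Set C}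
    {a b : ObjectProperty.FullSubcategory (· ∈ 𝒜)} (f g : a ⟶ b) :
    (Quotient.functor (subRel X 𝒜)).map f = (Quotient.functor (subRel X 𝒜)).map g ↔
      FactorsThru X (f.hom - g.hom) :=
  @Quotient.functor_map_eq_iff _ _ _ (subRel_congruence hX 𝒜) _ _ f g

section Approximation

variable [Preadditive C] [HasZeroObject C] [HasShift C ℤ]
  [∀ n : ℤ, (shiftFunctor C n).Additive] [Pretriangulated C] {X 𝒜 ℬ : Set C}

lemma factorsThru_of_comp_mor₃_eq_zero {T : Triangle C} (hT : T ∈ distTriang C)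
    (h₂ : T.obj₂ ∈ X) {B : C} {h : B ⟶ T.obj₃} (hh : h ≫ T.mor₃ = 0) : FactorsThru X h := by
  obtain ⟨g, rfl⟩ := Triangle.coyoneda_exact₃ T hT h hh
  exact ⟨_, g, T.mor₂, h₂, rfl⟩

lemma factorsThru_of_mor₃_comp_shift_eq_zero {T : Triangle C} (hT : T ∈ distTriang C)
    (h₂ : T.obj₂ ∈ X) {A : C} {f : T.obj₁ ⟶ A} (hf : T.mor₃ ≫ f⟦(1 : ℤ)⟧' = 0) :
    FactorsThru X f := by
  obtain ⟨g, hg, -⟩ := complete_distinguished_triangle_morphism₂ T _ hT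
    (contractible_distinguished A) f 0 (hf.trans zero_comp.symm)
  exact ⟨_, T.mor₁, g, h₂, hg.trans (comp_id f)⟩

variable (X) in
structure ApproxTriangle (A B : C) where
  X₀ : C
  α : A ⟶ X₀
  β : X₀ ⟶ B
  δ : B ⟶ A⟦(1 : ℤ)⟧
  distinguished : Triangle.mk α β δ ∈ distTriang C
  isLeftApprox : IsLeftApprox X α
  isRightApprox : IsRightApprox X β

namespace ApproxTriangle

variable {A B A₁ B₁ A₂ B₂ A₃ B₃ : C}
  (T₁ : ApproxTriangle X A₁ B₁) (T₂ : ApproxTriangle X A₂ B₂) (T₃ : ApproxTriangle X A₃ B₃)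

lemma δ_comp_shift_α (T : ApproxTriangle X A B) : T.δ ≫ T.α⟦(1 : ℤ)⟧' = 0 :=
  comp_distTriang_mor_zero₃₁ _ T.distinguished

lemma β_comp_δ (T : ApproxTriangle X A B) : T.β ≫ T.δ = 0 :=
  comp_distTriang_mor_zero₂₃ _ T.distinguished

def Compatible (f : A₁ ⟶ A₂) (h : B₁ ⟶ B₂) : Prop :=
  h ≫ T₂.δ = T₁.δ ≫ f⟦(1 : ℤ)⟧'

lemma compatible_id (T : ApproxTriangle X A B) : T.Compatible T (𝟙 A) (𝟙 B) := by
  simp [Compatible]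

variable {T₁ T₂ T₃}

lemma Compatible.comp {f : A₁ ⟶ A₂} {h : B₁ ⟶ B₂} {g : A₂ ⟶ A₃} {k : B₂ ⟶ B₃}
    (hfh : T₁.Compatible T₂ f h) (hgk : T₂.Compatible T₃ g k) :
    T₁.Compatible T₃ (f ≫ g) (h ≫ k) := by
  rw [Compatible, assoc, hgk, ← assoc, hfh, assoc, Functor.map_comp]

lemma Compatible.sub {f f' : A₁ ⟶ A₂} {h h' : B₁ ⟶ B₂}
    (hfh : T₁.Compatible T₂ f h) (hfh' : T₁.Compatible T₂ f' h') :
    T₁.Compatible T₂ (f - f') (h - h') := by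
  rw [Compatible, Preadditive.sub_comp, hfh, hfh', Functor.map_sub, Preadditive.comp_sub]

variable (T₁ T₂)

lemma exists_compatible_right (f : A₁ ⟶ A₂) : ∃ h, T₁.Compatible T₂ f h := by
  obtain ⟨g, hg⟩ := T₁.isLeftApprox.2 T₂.isLeftApprox.1 (f ≫ T₂.α)
  obtain ⟨h, -, hc⟩ := complete_distinguished_triangle_morphism _ _
    T₁.distinguished T₂.distinguished f g hg
  exact ⟨h, hc.symm⟩

lemma exists_compatible_left (h : B₁ ⟶ B₂) : ∃ f, T₁.Compatible T₂ f h := by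
  obtain ⟨g, hg⟩ := T₂.isRightApprox.2 T₁.isRightApprox.1 (T₁.β ≫ h)
  obtain ⟨f, -, hc⟩ := complete_distinguished_triangle_morphism₁ _ _
    T₁.distinguished T₂.distinguished g h hg.symm
  exact ⟨f, hc.symm⟩

variable {T₁ T₂}

lemma Compatible.factorsThru_right {f : A₁ ⟶ A₂} {h : B₁ ⟶ B₂} (hfh : T₁.Compatible T₂ f h)
    (hf : FactorsThru X f) : FactorsThru X h := by
  obtain ⟨M, u, v, hM, rfl⟩ := hf
  obtain ⟨w, rfl⟩ := T₁.isLeftApprox.2 hM u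
  have hδ : h ≫ T₂.δ = 0 := by
    rw [hfh]
    simp [← assoc, T₁.δ_comp_shift_α]
  exact factorsThru_of_comp_mor₃_eq_zero T₂.distinguished T₂.isLeftApprox.1 hδ

lemma Compatible.factorsThru_left {f : A₁ ⟶ A₂} {h : B₁ ⟶ B₂} (hfh : T₁.Compatible T₂ f h)
    (hh : FactorsThru X h) : FactorsThru X f := by
  obtain ⟨M, u, v, hM, rfl⟩ := hh
  obtain ⟨w, rfl⟩ := T₂.isRightApprox.2 hM v
  have hδ : T₁.δ ≫ f⟦(1 : ℤ)⟧' = 0 := by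
    rw [← hfh]
    simp [T₂.β_comp_δ]
  exact factorsThru_of_mor₃_comp_shift_eq_zero T₁.distinguished T₁.isRightApprox.1 hδ

end ApproxTriangle

lemma IsMutationPair.exists_approxTriangle_of_mem_left (hmut : IsMutationPair X 𝒜 ℬ) {A : C}
    (hA : A ∈ 𝒜) : ∃ B ∈ ℬ, Nonempty (ApproxTriangle X A B) := by
  obtain ⟨X₀, B, α, β, δ, hB, hT, hα, hβ⟩ := hmut.2.2.1 A hA
  exact ⟨B, hB, ⟨X₀, α, β, δ, hT, hα, hβ⟩⟩

lemma IsMutationPair.exists_approxTriangle_of_mem_right (hmut : IsMutationPair X 𝒜 ℬ) {B : C}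
    (hB : B ∈ ℬ) : ∃ A ∈ 𝒜, Nonempty (ApproxTriangle X A B) := by
  obtain ⟨A, X₀, α, β, δ, hA, hT, hα, hβ⟩ := hmut.2.2.2 B hB
  exact ⟨A, hA, ⟨X₀, α, β, δ, hT, hα, hβ⟩⟩

namespace IsMutationPair

open ObjectProperty

variable (hmut : IsMutationPair X 𝒜 ℬ)

noncomputable def mutationObj (a : FullSubcategory (· ∈ 𝒜)) : FullSubcategory (· ∈ ℬ) :=
  ⟨_, (hmut.exists_approxTriangle_of_mem_left a.2).choose_spec.1⟩

noncomputable def mutationTriangle (a : FullSubcategory (· ∈ 𝒜)) :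
    ApproxTriangle X a.obj (hmut.mutationObj a).obj :=
  (hmut.exists_approxTriangle_of_mem_left a.2).choose_spec.2.some

noncomputable def mutationHom {a b : FullSubcategory (· ∈ 𝒜)} (f : a ⟶ b) :
    hmut.mutationObj a ⟶ hmut.mutationObj b :=
  homMk ((hmut.mutationTriangle a).exists_compatible_right (hmut.mutationTriangle b) f.hom).choose

lemma compatible_mutationHom {a b : FullSubcategory (· ∈ 𝒜)} (f : a ⟶ b) :
    (hmut.mutationTriangle a).Compatible (hmut.mutationTriangle b) f.hom (hmut.mutationHom f).hom :=
  ((hmut.mutationTriangle a).exists_compatible_right (hmut.mutationTriangle b) f.hom).choose_spec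

end IsMutationPair

end Approximation

section QuotientEquivalence

variable [Preadditive C] [HasZeroObject C] [HasShift C ℤ]
  [∀ n : ℤ, (shiftFunctor C n).Additive] [Pretriangulated C] [HasBinaryBiproducts C]
  {X 𝒜 ℬ : Set C}

open ObjectProperty

lemma ApproxTriangle.Compatible.functor_map_eq {A₁ A₂ : C} (hX : IsAdditiveClosedSubcat X)
    {b₁ b₂ : FullSubcategory (· ∈ ℬ)} {T₁ : ApproxTriangle X A₁ b₁.obj}
    {T₂ : ApproxTriangle X A₂ b₂.obj} {f f' : A₁ ⟶ A₂} {h h' : b₁ ⟶ b₂}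
    (hfh : T₁.Compatible T₂ f h.hom) (hfh' : T₁.Compatible T₂ f' h'.hom)
    (hf : FactorsThru X (f - f')) :
    (Quotient.functor (subRel X ℬ)).map h = (Quotient.functor (subRel X ℬ)).map h' :=
  (subRel_functor_map_eq_iff hX h h').2 ((hfh.sub hfh').factorsThru_right hf)

noncomputable def ApproxTriangle.quotientIso {A : C} (hX : IsAdditiveClosedSubcat X)
    {b₁ b₂ : FullSubcategory (· ∈ ℬ)}
    (T₁ : ApproxTriangle X A b₁.obj) (T₂ : ApproxTriangle X A b₂.obj) :
    (Quotient.functor (subRel X ℬ)).obj b₁ ≅ (Quotient.functor (subRel X ℬ)).obj b₂ :=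
  have h₁₂ := T₁.exists_compatible_right T₂ (𝟙 A)
  have h₂₁ := T₂.exists_compatible_right T₁ (𝟙 A)
  { hom := (Quotient.functor _).map (homMk h₁₂.choose)
    inv := (Quotient.functor _).map (homMk h₂₁.choose)
    hom_inv_id := by
      rw [← Functor.map_comp, ← CategoryTheory.Functor.map_id]
      exact (h₁₂.choose_spec.comp h₂₁.choose_spec).functor_map_eq hX (h' := 𝟙 b₁)
        (T₁.compatible_id) (by simpa using FactorsThru.zero hX A A)
    inv_hom_id := by
      rw [← Functor.map_comp, ← CategoryTheory.Functor.map_id]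
      exact (h₂₁.choose_spec.comp h₁₂.choose_spec).functor_map_eq hX (h' := 𝟙 b₂)
        (T₂.compatible_id) (by simpa using FactorsThru.zero hX A A) }

namespace IsMutationPair

variable (hmut : IsMutationPair X 𝒜 ℬ) (hX : IsAdditiveClosedSubcat X)

noncomputable def mutationFunctor : FullSubcategory (· ∈ 𝒜) ⥤ Quotient (subRel X ℬ) where
  obj a := (Quotient.functor _).obj (hmut.mutationObj a)
  map f := (Quotient.functor _).map (hmut.mutationHom f)
  map_id a := ((hmut.compatible_mutationHom (𝟙 a)).functor_map_eq hX (h' := 𝟙 _)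
    (ApproxTriangle.compatible_id _) (by simpa using FactorsThru.zero hX _ _)).trans
    (CategoryTheory.Functor.map_id _ _)
  map_comp f g := ((hmut.compatible_mutationHom (f ≫ g)).functor_map_eq hX
    ((hmut.compatible_mutationHom f).comp (hmut.compatible_mutationHom g))
    (by simpa using FactorsThru.zero hX _ _)).trans (Functor.map_comp _ _ _)

noncomputable def quotientFunctor : Quotient (subRel X 𝒜) ⥤ Quotient (subRel X ℬ) :=
  CategoryTheory.Quotient.lift _ (hmut.mutationFunctor hX) fun _ _ f f' hff' =>
    (hmut.compatible_mutationHom f).functor_map_eq hX (hmut.compatible_mutationHom f') hff'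

instance : (hmut.quotientFunctor hX).Full where
  map_surjective {a b} φ := by
    obtain ⟨h, rfl⟩ := (Quotient.functor _).map_surjective φ
    obtain ⟨f, hfh⟩ :=
      (hmut.mutationTriangle a.as).exists_compatible_left (hmut.mutationTriangle b.as) h.hom
    exact ⟨(Quotient.functor _).map (homMk f),
      (hmut.compatible_mutationHom (homMk f)).functor_map_eq hX hfh
        (by simpa using FactorsThru.zero hX _ _)⟩

instance : (hmut.quotientFunctor hX).Faithful where
  map_injective {a b} φ ψ hφψ := by
    obtain ⟨f, rfl⟩ := (Quotient.functor _).map_surjective φ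
    obtain ⟨g, rfl⟩ := (Quotient.functor _).map_surjective ψ
    refine (subRel_functor_map_eq_iff hX f g).2 ?_
    exact ((hmut.compatible_mutationHom f).sub (hmut.compatible_mutationHom g)).factorsThru_left
      ((subRel_functor_map_eq_iff hX _ _).1 hφψ)

instance : (hmut.quotientFunctor hX).EssSurj where
  mem_essImage b := by
    obtain ⟨A, hA, ⟨T⟩⟩ := hmut.exists_approxTriangle_of_mem_right b.as.2
    exact ⟨⟨⟨A, hA⟩⟩, ⟨(hmut.mutationTriangle ⟨A, hA⟩).quotientIso hX T⟩⟩

instance : (hmut.quotientFunctor hX).IsEquivalence where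

end IsMutationPair

end QuotientEquivalence

/-- if `(𝒜, ℬ)` is an `X`-mutation pair, then the quotient
categories `𝒜/X` and `ℬ/X` are equivalent, via an equivalence `G` sending (the
class of) an object `A` of `𝒜` to (the class of) the third term `B'` of a
distinguished triangle `A → X₀ → B' → A⟦1⟧` whose first morphism is a left
`X`-approximation and whose second morphism is a right `X`-approximation. -/
theorem statement3 [Preadditive C] [HasZeroObject C] [HasShift C ℤ]
    [∀ n : ℤ, (shiftFunctor C n).Additive] [Pretriangulated C] [HasBinaryBiproducts C]
    (X 𝒜 ℬ : Set C) (hX : IsAdditiveClosedSubcat X)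
    (hmut : IsMutationPair X 𝒜 ℬ) :
    ∃ G : CategoryTheory.Quotient (subRel X 𝒜) ≌ CategoryTheory.Quotient (subRel X ℬ),
      ∀ (A : C) (hA : A ∈ 𝒜) (X₀ B' : C) (α : A ⟶ X₀) (β : X₀ ⟶ B')
        (δ : B' ⟶ (A⟦(1 : ℤ)⟧)) (hB' : B' ∈ ℬ),
        (Triangle.mk α β δ ∈ distTriang C) → IsLeftApprox X α → IsRightApprox X β →
        Nonempty (G.functor.obj ((Quotient.functor (subRel X 𝒜)).obj ⟨A, hA⟩) ≅
          (Quotient.functor (subRel X ℬ)).obj ⟨B', hB'⟩) :=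
  ⟨(hmut.quotientFunctor hX).asEquivalence, fun A hA X₀ _ α β δ _ hT hα hβ =>
    ⟨(hmut.mutationTriangle ⟨A, hA⟩).quotientIso hX ⟨X₀, α, β, δ, hT, hα, hβ⟩⟩⟩

end PaperStmt
end

section
/- Let A --f--> B --f'--> C --δ--> A⟦1⟧ be a distinguished triangle, and let h: E → B and h': B → D be morphisms with h' ∘ h = 0. If h is X-monic and h' ∘ f is X-monic, then f' ∘ h: E → C is X-monic. -/
/-!
Common definitions: the ideal of morphisms factoring through a subcategory `X`
(given as a set of objects of `C`), `X`-monic and `X`-epic morphisms, left and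
right `X`-approximations, additive subcategories closed under isomorphisms,
direct sums and direct summands, and the additive quotient category `C/X`
(realized via `CategoryTheory.Quotient` of the relation `xRel X`).
-/

open CategoryTheory Category Limits Pretriangulated

universe v u

namespace PaperStmt

variable {C : Type u} [Category.{v} C]

/- Extend `g` along `h` to `k : B ⟶ X'`, and extend `f ≫ k` along `f ≫ h'` to `s`. Then
`k - h' ≫ s` kills `f`, so it factors through `f'`; and since `h ≫ h' = 0`, the correction
`h' ≫ s` does not change the restriction of `k` to `E`. -/

section

variable [Preadditive C] [HasZeroObject C] [HasShift C ℤ]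
  [∀ n : ℤ, (shiftFunctor C n).Additive] [Pretriangulated C]

lemma exists_comp_comp_eq_comp_of_distTriang {A B Z E D W : C}
    {f : A ⟶ B} {f' : B ⟶ Z} {δ : Z ⟶ (A⟦(1 : ℤ)⟧)} (hT : Triangle.mk f f' δ ∈ distTriang C)
    {h : E ⟶ B} {h' : B ⟶ D} (hzero : h ≫ h' = 0)
    {k : B ⟶ W} {s : D ⟶ W} (hs : f ≫ h' ≫ s = f ≫ k) :
    ∃ t : Z ⟶ W, h ≫ f' ≫ t = h ≫ k := by
  obtain ⟨t, ht⟩ : ∃ t : Z ⟶ W, k - h' ≫ s = f' ≫ t :=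
    Triangle.yoneda_exact₂ _ hT _ (by
      change f ≫ (k - h' ≫ s) = 0
      rw [Preadditive.comp_sub, hs, sub_self])
  refine ⟨t, ?_⟩
  rw [← ht, Preadditive.comp_sub, reassoc_of% hzero, zero_comp, sub_zero]

end

/-- let `A --f--> B --f'--> Z --δ--> A⟦1⟧` be a distinguished
triangle and `h : E ⟶ B`, `h' : B ⟶ D` morphisms with `h' ∘ h = 0`. If `h` is
`X`-monic and `h' ∘ f` is `X`-monic, then `f' ∘ h : E ⟶ Z` is `X`-monic. -/
theorem statement4 [Preadditive C] [HasZeroObject C] [HasShift C ℤ]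
    [∀ n : ℤ, (shiftFunctor C n).Additive] [Pretriangulated C] [HasBinaryBiproducts C]
    (X : Set C) (hX : IsAdditiveClosedSubcat X)
    {A B Z E D : C}
    (f : A ⟶ B) (f' : B ⟶ Z) (δ : Z ⟶ (A⟦(1 : ℤ)⟧))
    (hT : Triangle.mk f f' δ ∈ distTriang C)
    (h : E ⟶ B) (h' : B ⟶ D) (hzero : h ≫ h' = 0)
    (hh : IsXMonic X h) (hhf : IsXMonic X (f ≫ h')) :
    IsXMonic X (h ≫ f') := by
  intro X' hX' g
  obtain ⟨k, rfl⟩ := hh hX' g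
  obtain ⟨s, hs⟩ := hhf hX' (f ≫ k)
  obtain ⟨t, ht⟩ := exists_comp_comp_eq_comp_of_distTriang hT hzero ((assoc _ _ _).symm.trans hs)
  exact ⟨t, by rw [assoc, ht]⟩

end PaperStmt
end

section
/- Let A --x--> B --y--> C --δ--> A⟦1⟧ and A --(x,α)^T--> B ⊕ X₀ --(m,γ)--> D --η--> A⟦1⟧ be distinguished triangles, where X₀ lies in X, x is X-monic and α: A → X₀ is a left X-approximation of A. Let (id_A, p, v) be a morphism of distinguished triangles from the second triangle to the first, where p = (1,0): B ⊕ X₀ → B is the projection. Then v: D → C becomes an isomorphism in the quotient category C/X. -/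
/-!
Common definitions: the ideal of morphisms factoring through a subcategory `X`
(given as a set of objects of `C`), `X`-monic and `X`-epic morphisms, left and
right `X`-approximations, additive subcategories closed under isomorphisms,
direct sums and direct summands, and the additive quotient category `C/X`
(realized via `CategoryTheory.Quotient` of the relation `xRel X`).
-/

open CategoryTheory Category Limits Pretriangulated

universe v u

namespace PaperStmt

variable {C : Type u} [Category.{v} C]

/-!
Take `s : B ⟶ X₀` with `x ≫ s = α` (as `x` is `X`-monic) and complete `(𝟙, (𝟙, s)ᵀ)` to a morphism
of triangles `u` in the other direction. Composing with `(𝟙, p, v)` gives endomorphisms of both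
triangles that are the identity on the first vertex and on the second vertex up to a morphism
factoring through `X₀`. For such an endomorphism `φ` of a distinguished triangle, `w = φ₃ - 𝟙`
kills the third morphism, hence factors through the second, so `w ≫ w` factors through `X`.
Thus `φ₃ = 𝟙 + w` is invertible in `C/X` with inverse `𝟙 - w`; so `u ≫ v` and `v ≫ u` are
isomorphisms in `C/X`, and hence so is `v`.
-/

lemma isIso_of_isIso_comp_of_isIso_comp {D : Type*} [Category D] {P Q : D} {f : P ⟶ Q}
    {g : Q ⟶ P} (_ : IsIso (f ≫ g)) (_ : IsIso (g ≫ f)) : IsIso g :=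
  have : Mono g := mono_of_mono g f
  have : IsSplitEpi g := IsSplitEpi.mk' ⟨inv (f ≫ g) ≫ f, by simp⟩
  isIso_of_mono_of_isSplitEpi g

lemma FactorsThru.comp_comp {X : Set C} {A B P Q : C} {f : A ⟶ B} (hf : FactorsThru X f)
    (g : P ⟶ A) (h : B ⟶ Q) : FactorsThru X (g ≫ f ≫ h) := by
  obtain ⟨M, a, b, hM, rfl⟩ := hf
  exact ⟨M, g ≫ a, b ≫ h, hM, by simp⟩

section Preadditive

variable [Preadditive C] {X : Set C}

lemma factorsThru_zero {M : C} (hM : M ∈ X) (A B : C) : FactorsThru X (0 : A ⟶ B) :=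
  ⟨M, 0, 0, hM, zero_comp⟩

lemma isIso_quotient_map_of_factorsThru_sq {D : C} (f : D ⟶ D)
    (hf : FactorsThru X ((f - 𝟙 D) ≫ (f - 𝟙 D))) :
    IsIso ((Quotient.functor (xRel X)).map f) := by
  set w := f - 𝟙 D
  have hfw : f = 𝟙 D + w := by simp [w]
  refine ⟨(Quotient.functor (xRel X)).map (𝟙 D - w), ?_, ?_⟩ <;>
  · rw [← Functor.map_comp, ← CategoryTheory.Functor.map_id]
    refine (CategoryTheory.Quotient.sound _ (?_ : FactorsThru X _)).symm
    convert hf using 1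
    rw [hfw]
    simp only [Preadditive.add_comp, Preadditive.sub_comp, Preadditive.comp_add,
      Preadditive.comp_sub, id_comp, comp_id]
    abel

end Preadditive

section Pretriangulated

variable [Preadditive C] [HasZeroObject C] [HasShift C ℤ] [∀ n : ℤ, (shiftFunctor C n).Additive]
  [Pretriangulated C] {X : Set C}

lemma factorsThru_sq_hom₃_sub_id {T : Triangle C} (hT : T ∈ distTriang C) (φ : T ⟶ T)
    (h₁ : φ.hom₁ = 𝟙 _) (h₂ : FactorsThru X (φ.hom₂ - 𝟙 _)) :
    FactorsThru X ((φ.hom₃ - 𝟙 _) ≫ (φ.hom₃ - 𝟙 _)) := by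
  obtain ⟨t, ht⟩ := Triangle.coyoneda_exact₃ T hT (φ.hom₃ - 𝟙 _) (by simp [← φ.comm₃, h₁])
  have hmor₂ : T.mor₂ ≫ (φ.hom₃ - 𝟙 _) = (φ.hom₂ - 𝟙 _) ≫ T.mor₂ := by simp [φ.comm₂]
  have hsq : (φ.hom₃ - 𝟙 _) ≫ (φ.hom₃ - 𝟙 _) = t ≫ (φ.hom₂ - 𝟙 _) ≫ T.mor₂ := by
    conv_lhs => arg 1; rw [ht]
    rw [assoc, hmor₂]
  exact hsq ▸ h₂.comp_comp t T.mor₂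

lemma isIso_quotient_map_hom₃ {T : Triangle C} (hT : T ∈ distTriang C) (φ : T ⟶ T)
    (h₁ : φ.hom₁ = 𝟙 _) (h₂ : FactorsThru X (φ.hom₂ - 𝟙 _)) :
    IsIso ((Quotient.functor (xRel X)).map φ.hom₃) :=
  isIso_quotient_map_of_factorsThru_sq _ (factorsThru_sq_hom₃_sub_id hT φ h₁ h₂)

end Pretriangulated

/-- let `A --x--> B --y--> Z --δ--> A⟦1⟧` and
`A --(x,α)ᵀ--> B ⊞ X₀ --(m,γ)--> D --η--> A⟦1⟧` be distinguished triangles with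
`X₀ ∈ X`, `x` `X`-monic and `α` a left `X`-approximation of `A`, and let
`(𝟙 A, biprod.fst, v)` be a morphism of triangles from the second triangle to
the first. Then `v : D ⟶ Z` becomes an isomorphism in the quotient `C/X`. -/
theorem statement5 [Preadditive C] [HasZeroObject C] [HasShift C ℤ]
    [∀ n : ℤ, (shiftFunctor C n).Additive] [Pretriangulated C] [HasBinaryBiproducts C]
    (X : Set C) (hX : IsAdditiveClosedSubcat X)
    {A B Z X₀ D : C}
    (x : A ⟶ B) (y : B ⟶ Z) (δ : Z ⟶ (A⟦(1 : ℤ)⟧))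
    (α : A ⟶ X₀) (m : B ⟶ D) (γ : X₀ ⟶ D) (η : D ⟶ (A⟦(1 : ℤ)⟧))
    (hT1 : Triangle.mk x y δ ∈ distTriang C)
    (hT2 : Triangle.mk (biprod.lift x α) (biprod.desc m γ) η ∈ distTriang C)
    (hxm : IsXMonic X x) (hα : IsLeftApprox X α)
    (v : D ⟶ Z)
    (hsq1 : biprod.lift x α ≫ biprod.fst = 𝟙 A ≫ x)
    (hsq2 : biprod.desc m γ ≫ v = biprod.fst ≫ y)
    (hsq3 : η ≫ ((𝟙 A)⟦(1 : ℤ)⟧') = v ≫ δ) :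
    IsIso ((Quotient.functor (xRel X)).map v) := by
  obtain ⟨s, hs⟩ := hxm hα.1 α
  let p : Triangle.mk (biprod.lift x α) (biprod.desc m γ) η ⟶ Triangle.mk x y δ :=
    Triangle.homMk _ _ (𝟙 A) biprod.fst v hsq1 hsq2 hsq3
  have hsqi : x ≫ biprod.lift (𝟙 B) s = 𝟙 A ≫ biprod.lift x α := by ext <;> simp [hs]
  obtain ⟨u, hu₂, hu₃⟩ := complete_distinguished_triangle_morphism _ _ hT1 hT2
    (𝟙 A) (biprod.lift (𝟙 B) s) hsqi
  let i : Triangle.mk x y δ ⟶ Triangle.mk (biprod.lift x α) (biprod.desc m γ) η :=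
    Triangle.homMk _ _ (𝟙 A) (biprod.lift (𝟙 B) s) u hsqi hu₂ hu₃
  have hip : FactorsThru X (biprod.lift (𝟙 B) s ≫ biprod.fst - 𝟙 B) := by
    rw [biprod.lift_fst, sub_self]
    exact factorsThru_zero hα.1 B B
  have hpi : FactorsThru X (biprod.fst ≫ biprod.lift (𝟙 B) s - 𝟙 (B ⊞ X₀)) :=
    ⟨X₀, biprod.fst ≫ s - biprod.snd, biprod.inr, hα.1, by ext <;> simp⟩
  have huv := isIso_quotient_map_hom₃ hT1 (i ≫ p) (id_comp _) hip
  have hvu := isIso_quotient_map_hom₃ hT2 (p ≫ i) (id_comp _) hpi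
  rw [comp_hom₃, Functor.map_comp] at huv hvu
  exact isIso_of_isIso_comp_of_isIso_comp huv hvu

end PaperStmt
end

section
/- Let (a, b, c) be a morphism of distinguished triangles from T: A --x--> B --y--> C → A⟦1⟧ to T': A' --x'--> B' --y'--> C' → A'⟦1⟧, where x and x' are X-monic. Let S: A --α--> X_A --β--> A⟨1⟩ → A⟦1⟧ and S': A' --α'--> X_{A'} --β'--> A'⟨1⟩ → A'⟦1⟧ be distinguished triangles with X_A and X_{A'} in X and with α and α' left X-approximations. Suppose further that (id_A, d, z): T → S, (id_{A'}, d', z'): T' → S' and (a, e, a₁): S → S' are morphisms of distinguished triangles. Then a₁ ∘ z - z' ∘ c factors through an object of X. -/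
/-!
Common definitions: the ideal of morphisms factoring through a subcategory `X`
(given as a set of objects of `C`), `X`-monic and `X`-epic morphisms, left and
right `X`-approximations, additive subcategories closed under isomorphisms,
direct sums and direct summands, and the additive quotient category `C/X`
(realized via `CategoryTheory.Quotient` of the relation `xRel X`).
-/

open CategoryTheory Category Limits Pretriangulated

universe v u

namespace PaperStmt

variable {C : Type u} [Category.{v} C]

/-- with morphisms of distinguished triangles `(a,b,c) : T → T'`,
`(𝟙, d, z) : T → S`, `(𝟙, d', z') : T' → S'` and `(a, e, a₁) : S → S'`, where
the first morphisms `x, x'` of `T, T'` are `X`-monic and `S, S'` are triangles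
on left `X`-approximations `α, α'`, the difference `a₁ ∘ z - z' ∘ c` factors
through an object of `X`. -/
theorem statement6 [Preadditive C] [HasZeroObject C] [HasShift C ℤ]
    [∀ n : ℤ, (shiftFunctor C n).Additive] [Pretriangulated C] [HasBinaryBiproducts C]
    (X : Set C) (hX : IsAdditiveClosedSubcat X)
    {A B Z A' B' Z' XA XA' A₁ A₁' : C}
    -- the triangle T
    (x : A ⟶ B) (y : B ⟶ Z) (w : Z ⟶ (A⟦(1 : ℤ)⟧))
    (hT : Triangle.mk x y w ∈ distTriang C) (hx : IsXMonic X x)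
    -- the triangle T'
    (x' : A' ⟶ B') (y' : B' ⟶ Z') (w' : Z' ⟶ (A'⟦(1 : ℤ)⟧))
    (hT' : Triangle.mk x' y' w' ∈ distTriang C) (hx' : IsXMonic X x')
    -- the triangle S
    (α : A ⟶ XA) (β : XA ⟶ A₁) (σ : A₁ ⟶ (A⟦(1 : ℤ)⟧))
    (hS : Triangle.mk α β σ ∈ distTriang C) (hα : IsLeftApprox X α)
    -- the triangle S'
    (α' : A' ⟶ XA') (β' : XA' ⟶ A₁') (σ' : A₁' ⟶ (A'⟦(1 : ℤ)⟧))
    (hS' : Triangle.mk α' β' σ' ∈ distTriang C) (hα' : IsLeftApprox X α')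
    -- the morphism (a, b, c) : T → T'
    (a : A ⟶ A') (b : B ⟶ B') (c : Z ⟶ Z')
    (h1 : x ≫ b = a ≫ x') (h2 : y ≫ c = b ≫ y') (h3 : w ≫ (a⟦(1 : ℤ)⟧') = c ≫ w')
    -- the morphism (𝟙 A, d, z) : T → S
    (d : B ⟶ XA) (z : Z ⟶ A₁)
    (h4 : x ≫ d = 𝟙 A ≫ α) (h5 : y ≫ z = d ≫ β) (h6 : w ≫ ((𝟙 A)⟦(1 : ℤ)⟧') = z ≫ σ)
    -- the morphism (𝟙 A', d', z') : T' → S'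
    (d' : B' ⟶ XA') (z' : Z' ⟶ A₁')
    (h7 : x' ≫ d' = 𝟙 A' ≫ α') (h8 : y' ≫ z' = d' ≫ β')
    (h9 : w' ≫ ((𝟙 A')⟦(1 : ℤ)⟧') = z' ≫ σ')
    -- the morphism (a, e, a₁) : S → S'
    (e : XA ⟶ XA') (a₁ : A₁ ⟶ A₁')
    (h10 : α ≫ e = a ≫ α') (h11 : β ≫ a₁ = e ≫ β')
    (h12 : σ ≫ (a⟦(1 : ℤ)⟧') = a₁ ≫ σ') :
    FactorsThru X (z ≫ a₁ - c ≫ z') := by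
  have hzσ : z ≫ σ = w := by
    rw [← h6]; simp
  have hz'σ' : z' ≫ σ' = w' := by
    rw [← h9]; simp
  have hzero : (z ≫ a₁ - c ≫ z') ≫ σ' = 0 := by
    have e1 : z ≫ a₁ ≫ σ' = w ≫ a⟦(1 : ℤ)⟧' := by
      rw [← h12, ← Category.assoc, hzσ]
    have e2 : c ≫ z' ≫ σ' = w ≫ a⟦(1 : ℤ)⟧' := by
      rw [hz'σ', h3]
    simp only [Preadditive.sub_comp, Category.assoc, e1, e2, sub_self]
  obtain ⟨t, ht⟩ := Triangle.coyoneda_exact₃ _ hS' (z ≫ a₁ - c ≫ z') hzero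
  exact ⟨XA', t, β', hα'.1, ht.symm⟩

end PaperStmt
end

section
/- Let A --(x,α)^T--> B ⊕ X₀ --(y,γ)--> C --δ--> A⟦1⟧ be a distinguished triangle, where X₀ lies in X and α: A → X₀ is a left X-approximation of A. Then y: B → C is X-monic. -/
/-!
Common definitions: the ideal of morphisms factoring through a subcategory `X`
(given as a set of objects of `C`), `X`-monic and `X`-epic morphisms, left and
right `X`-approximations, additive subcategories closed under isomorphisms,
direct sums and direct summands, and the additive quotient category `C/X`
(realized via `CategoryTheory.Quotient` of the relation `xRel X`).
-/

open CategoryTheory Category Limits Pretriangulated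

universe v u

namespace PaperStmt

variable {C : Type u} [Category.{v} C]

section

variable [Preadditive C] [HasZeroObject C] [HasShift C ℤ]
  [∀ n : ℤ, (shiftFunctor C n).Additive] [Pretriangulated C] [HasBinaryBiproducts C]

/- The square formed by `x, α, y, γ` is a weak pushout, by exactness of `Hom(-, W)` at `B ⊞ X₀`. -/
lemma exists_desc_of_biprod_triangle {A B X₀ Z W : C}
    {x : A ⟶ B} {α : A ⟶ X₀} {y : B ⟶ Z} {γ : X₀ ⟶ Z} {δ : Z ⟶ (A⟦(1 : ℤ)⟧)}
    (hT : Triangle.mk (biprod.lift x α) (biprod.desc y γ) δ ∈ distTriang C)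
    (g : B ⟶ W) (s : X₀ ⟶ W) (hgs : x ≫ g + α ≫ s = 0) :
    ∃ h : Z ⟶ W, y ≫ h = g ∧ γ ≫ h = s := by
  obtain ⟨h, hh⟩ := Triangle.yoneda_exact₂ _ hT (biprod.desc g s) <| by
    change biprod.lift x α ≫ biprod.desc g s = 0
    rwa [biprod.lift_desc]
  have hh' : biprod.desc y γ ≫ h = biprod.desc g s := hh.symm
  exact ⟨h, by rw [← biprod.inl_desc_assoc y γ h, hh', biprod.inl_desc],
    by rw [← biprod.inr_desc_assoc y γ h, hh', biprod.inr_desc]⟩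

end

/-- if `A --(x,α)ᵀ--> B ⊞ X₀ --(y,γ)--> Z --δ--> A⟦1⟧` is a
distinguished triangle with `X₀ ∈ X` and `α : A ⟶ X₀` a left
`X`-approximation of `A`, then `y : B ⟶ Z` is `X`-monic. -/
theorem statement8 [Preadditive C] [HasZeroObject C] [HasShift C ℤ]
    [∀ n : ℤ, (shiftFunctor C n).Additive] [Pretriangulated C] [HasBinaryBiproducts C]
    (X : Set C) (hX : IsAdditiveClosedSubcat X)
    {A B X₀ Z : C}
    (x : A ⟶ B) (α : A ⟶ X₀) (y : B ⟶ Z) (γ : X₀ ⟶ Z) (δ : Z ⟶ (A⟦(1 : ℤ)⟧))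
    (hT : Triangle.mk (biprod.lift x α) (biprod.desc y γ) δ ∈ distTriang C)
    (hα : IsLeftApprox X α) :
    IsXMonic X y := by
  intro X' hX' g
  obtain ⟨s, hs⟩ := hα.2 hX' (x ≫ g)
  obtain ⟨h, hyh, -⟩ := exists_desc_of_biprod_triangle hT g (-s) (by simp [hs])
  exact ⟨h, hyh⟩

end PaperStmt
end

section
/- Let A --f--> B --g--> C → A⟦1⟧ and A' --f'--> B' --g'--> C' → A'⟦1⟧ be distinguished triangles with f X-monic, and let a: A → A' and b: B → B' be morphisms such that b ∘ f - f' ∘ a factors through an object of X. Then there exists a morphism b': B → B' such that b' ∘ f = f' ∘ a and b - b' factors through an object of X. -/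
/-!
Common definitions: the ideal of morphisms factoring through a subcategory `X`
(given as a set of objects of `C`), `X`-monic and `X`-epic morphisms, left and
right `X`-approximations, additive subcategories closed under isomorphisms,
direct sums and direct summands, and the additive quotient category `C/X`
(realized via `CategoryTheory.Quotient` of the relation `xRel X`).
-/

open CategoryTheory Category Limits Pretriangulated

universe v u

namespace PaperStmt

variable {C : Type u} [Category.{v} C]

/-- let `A --f--> B --g--> Z → A⟦1⟧` and
`A' --f'--> B' --g'--> Z' → A'⟦1⟧` be distinguished triangles with `f`
`X`-monic, and `a : A ⟶ A'`, `b : B ⟶ B'` morphisms such that `b ∘ f - f' ∘ a`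
factors through an object of `X`. Then there is `b' : B ⟶ B'` with
`b' ∘ f = f' ∘ a` such that `b - b'` factors through an object of `X`. -/
theorem statement9 [Preadditive C] [HasZeroObject C] [HasShift C ℤ]
    [∀ n : ℤ, (shiftFunctor C n).Additive] [Pretriangulated C] [HasBinaryBiproducts C]
    (X : Set C) (hX : IsAdditiveClosedSubcat X)
    {A B Z A' B' Z' : C}
    (f : A ⟶ B) (g : B ⟶ Z) (δ : Z ⟶ (A⟦(1 : ℤ)⟧))
    (f' : A' ⟶ B') (g' : B' ⟶ Z') (δ' : Z' ⟶ (A'⟦(1 : ℤ)⟧))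
    (hT : Triangle.mk f g δ ∈ distTriang C)
    (hT' : Triangle.mk f' g' δ' ∈ distTriang C)
    (hf : IsXMonic X f)
    (a : A ⟶ A') (b : B ⟶ B')
    (hab : FactorsThru X (f ≫ b - a ≫ f')) :
    ∃ b' : B ⟶ B', f ≫ b' = a ≫ f' ∧ FactorsThru X (b - b') := by
  obtain ⟨M, u, v, hM, huv⟩ := hab
  obtain ⟨k, hk⟩ := hf hM u
  refine ⟨b - k ≫ v, ?_, M, k, v, hM, by abel⟩
  have : f ≫ (k ≫ v) = f ≫ b - a ≫ f' := by rw [← Category.assoc, hk, huv]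
  simp only [Preadditive.comp_sub, this]
  abel

end PaperStmt
end

section
/- Assume τX = X. Let A --f--> X₀ --g--> B → A⟦1⟧ be a distinguished triangle with X₀ an object of X. If f is a left X-approximation of A, then g is a right X-approximation of B. Dually, if g is a right X-approximation of B, then f is a left X-approximation of A. -/
/-!
By the exact Hom sequences of the triangle `A → X₀ → B → A⟦1⟧`, `g` is `X`-epic once
`u ≫ δ = 0` for every `u : X' ⟶ B` with `X' ∈ X`, and `f` is `X`-monic once `δ ≫ φ⟦1⟧ = 0`
for every `φ : A ⟶ X'`. Serre duality detects these vanishings by pairing with morphisms into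
`τ` of the source object. Since `τX = X`, such a morphism factors through the approximation on
the other side of the triangle, and the pairing then vanishes because consecutive morphisms of a
distinguished triangle compose to zero.
-/

open CategoryTheory Category Limits Pretriangulated

universe v u

namespace PaperStmt

variable {C : Type u} [Category.{v} C]

theorem _root_.CategoryTheory.Pretriangulated.Triangle.yoneda_exact₁ [Preadditive C]
    [HasZeroObject C] [HasShift C ℤ] [∀ n : ℤ, (shiftFunctor C n).Additive] [Pretriangulated C]
    (T : Triangle C) (hT : T ∈ distTriang C) {Y : C} (φ : T.obj₁ ⟶ Y)
    (hφ : T.mor₃ ≫ φ⟦(1 : ℤ)⟧' = 0) : ∃ h : T.obj₂ ⟶ Y, φ = T.mor₁ ≫ h := by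
  obtain ⟨h, hh⟩ : ∃ h : T.obj₂⟦(1 : ℤ)⟧ ⟶ Y⟦(1 : ℤ)⟧, φ⟦(1 : ℤ)⟧' = (-T.mor₁⟦(1 : ℤ)⟧') ≫ h :=
    Triangle.yoneda_exact₃ _ (rot_of_distTriang _ hT) (φ⟦(1 : ℤ)⟧') hφ
  refine ⟨(shiftFunctor C (1 : ℤ)).preimage (-h), (shiftFunctor C (1 : ℤ)).map_injective ?_⟩
  rw [Functor.map_comp, Functor.map_preimage]
  simpa using hh

section SerreDuality

variable [Preadditive C] [HasShift C ℤ] (k : Type*) [CommSemiring k] [Linear k C] (τ : C ⥤ C)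
  (e : ∀ A B : C, (A ⟶ (B⟦(1 : ℤ)⟧)) ≃ₗ[k] ((B ⟶ τ.obj A) →ₗ[k] k))

theorem eq_zero_of_serreDual_eq_zero {A B : C} (φ : A ⟶ B⟦(1 : ℤ)⟧)
    (hφ : ∀ ψ, e A B φ ψ = 0) : φ = 0 :=
  (e A B).map_eq_zero_iff.mp (LinearMap.ext hφ)

theorem eq_zero_of_comp_shift_eq_zero_of_isXMonic
    (he₂ : ∀ {A B B' : C} (h : B ⟶ B') (φ : A ⟶ (B⟦(1 : ℤ)⟧)) (g : B' ⟶ τ.obj A),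
      e A B' (φ ≫ (h⟦(1 : ℤ)⟧')) g = e A B φ (h ≫ g))
    {X : Set C} {A X₀ Y : C} {f : A ⟶ X₀} (hf : IsXMonic X f) (hY : τ.obj Y ∈ X)
    (φ : Y ⟶ A⟦(1 : ℤ)⟧) (hφ : φ ≫ f⟦(1 : ℤ)⟧' = 0) : φ = 0 := by
  refine eq_zero_of_serreDual_eq_zero k τ e φ fun ψ => ?_
  obtain ⟨χ, rfl⟩ := hf hY ψ
  rw [← he₂, hφ, map_zero, LinearMap.zero_apply]

theorem comp_shift_eq_zero_of_isXEpic [τ.Full]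
    (he₁ : ∀ {A' A B : C} (f : A' ⟶ A) (φ : A ⟶ (B⟦(1 : ℤ)⟧)) (g : B ⟶ τ.obj A'),
      e A' B (f ≫ φ) g = e A B φ (g ≫ τ.map f))
    (he₂ : ∀ {A B B' : C} (h : B ⟶ B') (φ : A ⟶ (B⟦(1 : ℤ)⟧)) (g : B' ⟶ τ.obj A),
      e A B' (φ ≫ (h⟦(1 : ℤ)⟧')) g = e A B φ (h ≫ g))
    {X : Set C} {A X₀ B Y : C} {g : X₀ ⟶ B} (hg : IsXEpic X g) (δ : B ⟶ A⟦(1 : ℤ)⟧)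
    (hgδ : g ≫ δ = 0) (hY : ∃ Z ∈ X, Nonempty (τ.obj Z ≅ Y)) (φ : A ⟶ Y) :
    δ ≫ φ⟦(1 : ℤ)⟧' = 0 := by
  obtain ⟨Z, hZ, ⟨i⟩⟩ := hY
  refine eq_zero_of_serreDual_eq_zero k τ e _ fun ψ => ?_
  obtain ⟨β, hβ⟩ := τ.map_surjective (i.hom ≫ ψ)
  obtain ⟨w, rfl⟩ := hg hZ β
  have hψ : ψ = i.inv ≫ τ.map w ≫ τ.map g := by rw [← τ.map_comp, hβ, Iso.inv_hom_id_assoc]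
  rw [he₂, hψ, ← assoc, ← assoc, ← he₁, hgδ, map_zero, LinearMap.zero_apply]

theorem isXEpic_mor₂_of_isXMonic_mor₁ [HasZeroObject C] [∀ n : ℤ, (shiftFunctor C n).Additive]
    [Pretriangulated C]
    (he₂ : ∀ {A B B' : C} (h : B ⟶ B') (φ : A ⟶ (B⟦(1 : ℤ)⟧)) (g : B' ⟶ τ.obj A),
      e A B' (φ ≫ (h⟦(1 : ℤ)⟧')) g = e A B φ (h ≫ g))
    {X : Set C} (hτX : ∀ X' ∈ X, τ.obj X' ∈ X) {T : Triangle C} (hT : T ∈ distTriang C)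
    (hf : IsXMonic X T.mor₁) : IsXEpic X T.mor₂ := by
  intro X' hX' u
  have hu : u ≫ T.mor₃ = 0 :=
    eq_zero_of_comp_shift_eq_zero_of_isXMonic k τ e he₂ hf (hτX X' hX') _ <| by
      rw [assoc, comp_distTriang_mor_zero₃₁ _ hT, comp_zero]
  obtain ⟨h, hh⟩ := Triangle.coyoneda_exact₃ _ hT u hu
  exact ⟨h, hh.symm⟩

theorem isXMonic_mor₁_of_isXEpic_mor₂ [HasZeroObject C] [∀ n : ℤ, (shiftFunctor C n).Additive]
    [Pretriangulated C] [τ.Full]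
    (he₁ : ∀ {A' A B : C} (f : A' ⟶ A) (φ : A ⟶ (B⟦(1 : ℤ)⟧)) (g : B ⟶ τ.obj A'),
      e A' B (f ≫ φ) g = e A B φ (g ≫ τ.map f))
    (he₂ : ∀ {A B B' : C} (h : B ⟶ B') (φ : A ⟶ (B⟦(1 : ℤ)⟧)) (g : B' ⟶ τ.obj A),
      e A B' (φ ≫ (h⟦(1 : ℤ)⟧')) g = e A B φ (h ≫ g))
    {X : Set C} (hτX : ∀ X' ∈ X, ∃ Y ∈ X, Nonempty (τ.obj Y ≅ X')) {T : Triangle C}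
    (hT : T ∈ distTriang C) (hg : IsXEpic X T.mor₂) : IsXMonic X T.mor₁ := by
  intro X' hX' φ
  obtain ⟨h, hh⟩ := Triangle.yoneda_exact₁ T hT φ <|
    comp_shift_eq_zero_of_isXEpic k τ e he₁ he₂ hg _ (comp_distTriang_mor_zero₂₃ _ hT)
      (hτX X' hX') φ
  exact ⟨h, hh.symm⟩

end SerreDuality

/-- in a `k`-linear Hom-finite triangulated category with
Auslander–Reiten (Serre) duality `Hom(A, B⟦1⟧) ≅ D Hom(B, τA)` and `τX = X`:
for a distinguished triangle `A --f--> X₀ --g--> B → A⟦1⟧` with `X₀ ∈ X`, if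
`f` is a left `X`-approximation of `A`, then `g` is a right `X`-approximation
of `B`, and conversely. -/
theorem statement10 [Preadditive C] [HasZeroObject C] [HasShift C ℤ]
    [∀ n : ℤ, (shiftFunctor C n).Additive] [Pretriangulated C] [HasBinaryBiproducts C]
    (k : Type*) [Field k] [CategoryTheory.Linear k C]
    [∀ A B : C, FiniteDimensional k (A ⟶ B)]
    (τ : C ⥤ C) [τ.Additive] [τ.IsEquivalence]
    (e : ∀ A B : C, (A ⟶ (B⟦(1 : ℤ)⟧)) ≃ₗ[k] ((B ⟶ τ.obj A) →ₗ[k] k))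
    (he₁ : ∀ {A' A B : C} (f : A' ⟶ A) (φ : A ⟶ (B⟦(1 : ℤ)⟧)) (g : B ⟶ τ.obj A'),
      e A' B (f ≫ φ) g = e A B φ (g ≫ τ.map f))
    (he₂ : ∀ {A B B' : C} (h : B ⟶ B') (φ : A ⟶ (B⟦(1 : ℤ)⟧)) (g : B' ⟶ τ.obj A),
      e A B' (φ ≫ (h⟦(1 : ℤ)⟧')) g = e A B φ (h ≫ g))
    (X : Set C) (hX : IsAdditiveClosedSubcat X)
    (hτ₁ : ∀ X' ∈ X, τ.obj X' ∈ X)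
    (hτ₂ : ∀ X' ∈ X, ∃ Y ∈ X, Nonempty (τ.obj Y ≅ X'))
    {A X₀ B : C} (f : A ⟶ X₀) (g : X₀ ⟶ B) (δ : B ⟶ (A⟦(1 : ℤ)⟧))
    (hX₀ : X₀ ∈ X)
    (hT : Triangle.mk f g δ ∈ distTriang C) :
    (IsLeftApprox X f → IsRightApprox X g) ∧ (IsRightApprox X g → IsLeftApprox X f) :=
  ⟨fun hf => ⟨hX₀, isXEpic_mor₂_of_isXMonic_mor₁ k τ e he₂ hτ₁ hT hf.2⟩,
    fun hg => ⟨hX₀, isXMonic_mor₁_of_isXEpic_mor₂ k τ e he₁ he₂ hτ₂ hT hg.2⟩⟩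

end PaperStmt
end

section
/- Assume τX = X. If A --f--> B --g--> C → A⟦1⟧ is a distinguished triangle in C, then f is X-monic if and only if g is X-epic. -/
/-!
Common definitions: the ideal of morphisms factoring through a subcategory `X`
(given as a set of objects of `C`), `X`-monic and `X`-epic morphisms, left and
right `X`-approximations, additive subcategories closed under isomorphisms,
direct sums and direct summands, and the additive quotient category `C/X`
(realized via `CategoryTheory.Quotient` of the relation `xRel X`).
-/

open CategoryTheory Category Limits Pretriangulated

universe v u

namespace PaperStmt

variable {C : Type u} [Category.{v} C]

section Triangulated

variable [Preadditive C] [HasZeroObject C] [HasShift C ℤ]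
  [∀ n : ℤ, (shiftFunctor C n).Additive] [Pretriangulated C]
  {A B Z : C} {f : A ⟶ B} {g : B ⟶ Z} {δ : Z ⟶ A⟦(1 : ℤ)⟧}

lemma exists_comp_eq_of_comp_shift_map_eq_zero (hT : Triangle.mk f g δ ∈ distTriang C)
    {Y : C} (φ : A ⟶ Y) (hφ : δ ≫ φ⟦(1 : ℤ)⟧' = 0) : ∃ ψ : B ⟶ Y, f ≫ ψ = φ := by
  obtain ⟨χ, hχ⟩ := Triangle.yoneda_exact₃ _ (rot_of_distTriang _ hT) _ hφ
  obtain ⟨ψ, rfl⟩ := (shiftFunctor C (1 : ℤ)).map_surjective χ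
  change B ⟶ Y at ψ
  -- the rotated triangle has third morphism `-f⟦1⟧'`, hence the sign
  refine ⟨-ψ, (shiftFunctor C (1 : ℤ)).map_injective ?_⟩
  rw [hχ, Functor.map_comp, Functor.map_neg, Preadditive.comp_neg]
  exact (Preadditive.neg_comp _ _).symm

lemma isXMonic_iff_comp_shift_map_eq_zero (X : Set C) (hT : Triangle.mk f g δ ∈ distTriang C) :
    IsXMonic X f ↔ ∀ X' ∈ X, ∀ φ : A ⟶ X', δ ≫ φ⟦(1 : ℤ)⟧' = 0 := by
  refine ⟨fun hf X' hX' φ => ?_, fun h X' hX' φ =>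
    exists_comp_eq_of_comp_shift_map_eq_zero hT φ (h X' hX' φ)⟩
  obtain ⟨ψ, rfl⟩ := hf hX' φ
  have hδf : δ ≫ f⟦(1 : ℤ)⟧' = 0 := comp_distTriang_mor_zero₃₁ _ hT
  rw [Functor.map_comp, reassoc_of% hδf, zero_comp]

lemma isXEpic_iff_comp_eq_zero (X : Set C) (hT : Triangle.mk f g δ ∈ distTriang C) :
    IsXEpic X g ↔ ∀ X' ∈ X, ∀ ψ : X' ⟶ Z, ψ ≫ δ = 0 := by
  refine ⟨fun hg X' hX' ψ => ?_, fun h X' hX' ψ => ?_⟩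
  · obtain ⟨χ, rfl⟩ := hg hX' ψ
    have hgδ : g ≫ δ = 0 := comp_distTriang_mor_zero₂₃ _ hT
    rw [assoc, hgδ, comp_zero]
  · obtain ⟨χ, hχ⟩ := Triangle.coyoneda_exact₃ _ hT ψ (h X' hX' ψ)
    exact ⟨χ, hχ.symm⟩

end Triangulated

section Duality

variable [Preadditive C] [HasShift C ℤ] {k : Type*} [Field k] [Linear k C] {τ : C ⥤ C}

lemma comp_shift_map_eq_zero_iff_forall_dual
    (e : ∀ A B : C, (A ⟶ (B⟦(1 : ℤ)⟧)) ≃ₗ[k] ((B ⟶ τ.obj A) →ₗ[k] k))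
    (he₂ : ∀ {A B B' : C} (h : B ⟶ B') (φ : A ⟶ (B⟦(1 : ℤ)⟧)) (g : B' ⟶ τ.obj A),
      e A B' (φ ≫ (h⟦(1 : ℤ)⟧')) g = e A B φ (h ≫ g))
    {A Y Z : C} (δ : Z ⟶ A⟦(1 : ℤ)⟧) (φ : A ⟶ Y) :
    δ ≫ φ⟦(1 : ℤ)⟧' = 0 ↔ ∀ γ : Y ⟶ τ.obj Z, e Z A δ (φ ≫ γ) = 0 := by
  rw [← (e Z Y).map_eq_zero_iff, LinearMap.ext_iff]
  simp only [he₂, LinearMap.zero_apply]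

lemma comp_eq_zero_iff_forall_dual
    (e : ∀ A B : C, (A ⟶ (B⟦(1 : ℤ)⟧)) ≃ₗ[k] ((B ⟶ τ.obj A) →ₗ[k] k))
    (he₁ : ∀ {A' A B : C} (f : A' ⟶ A) (φ : A ⟶ (B⟦(1 : ℤ)⟧)) (g : B ⟶ τ.obj A'),
      e A' B (f ≫ φ) g = e A B φ (g ≫ τ.map f))
    {A Y Z : C} (δ : Z ⟶ A⟦(1 : ℤ)⟧) (ψ : Y ⟶ Z) :
    ψ ≫ δ = 0 ↔ ∀ γ : A ⟶ τ.obj Y, e Z A δ (γ ≫ τ.map ψ) = 0 := by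
  rw [← (e Y A).map_eq_zero_iff, LinearMap.ext_iff]
  simp only [he₁, LinearMap.zero_apply]

end Duality

lemma factorsThru_iff_exists_comp_map {τ : C ⥤ C} [τ.Full] (X : Set C)
    (hτ₁ : ∀ X' ∈ X, τ.obj X' ∈ X) (hτ₂ : ∀ X' ∈ X, ∃ Y ∈ X, Nonempty (τ.obj Y ≅ X'))
    {A Z : C} (h : A ⟶ τ.obj Z) :
    FactorsThru X h ↔ ∃ Y ∈ X, ∃ (γ : A ⟶ τ.obj Y) (ψ : Y ⟶ Z), γ ≫ τ.map ψ = h := by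
  constructor
  · rintro ⟨M, u, v, hM, rfl⟩
    obtain ⟨Y, hY, ⟨ι⟩⟩ := hτ₂ M hM
    obtain ⟨ψ, hψ⟩ := τ.map_surjective (ι.hom ≫ v)
    exact ⟨Y, hY, u ≫ ι.inv, ψ, by simp [hψ]⟩
  · rintro ⟨Y, hY, γ, ψ, rfl⟩
    exact ⟨τ.obj Y, γ, τ.map ψ, hτ₁ Y hY, rfl⟩

/-- in a `k`-linear Hom-finite triangulated category with
Auslander–Reiten (Serre) duality and `τX = X`, for any distinguished triangle
`A --f--> B --g--> Z → A⟦1⟧`, `f` is `X`-monic if and only if `g` is `X`-epic. -/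
theorem statement15 [Preadditive C] [HasZeroObject C] [HasShift C ℤ]
    [∀ n : ℤ, (shiftFunctor C n).Additive] [Pretriangulated C] [HasBinaryBiproducts C]
    (k : Type*) [Field k] [CategoryTheory.Linear k C]
    [∀ A B : C, FiniteDimensional k (A ⟶ B)]
    (τ : C ⥤ C) [τ.Additive] [τ.IsEquivalence]
    (e : ∀ A B : C, (A ⟶ (B⟦(1 : ℤ)⟧)) ≃ₗ[k] ((B ⟶ τ.obj A) →ₗ[k] k))
    (he₁ : ∀ {A' A B : C} (f : A' ⟶ A) (φ : A ⟶ (B⟦(1 : ℤ)⟧)) (g : B ⟶ τ.obj A'),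
      e A' B (f ≫ φ) g = e A B φ (g ≫ τ.map f))
    (he₂ : ∀ {A B B' : C} (h : B ⟶ B') (φ : A ⟶ (B⟦(1 : ℤ)⟧)) (g : B' ⟶ τ.obj A),
      e A B' (φ ≫ (h⟦(1 : ℤ)⟧')) g = e A B φ (h ≫ g))
    (X : Set C) (hX : IsAdditiveClosedSubcat X)
    (hτ₁ : ∀ X' ∈ X, τ.obj X' ∈ X)
    (hτ₂ : ∀ X' ∈ X, ∃ Y ∈ X, Nonempty (τ.obj Y ≅ X'))
    {A B Z : C} (f : A ⟶ B) (g : B ⟶ Z) (δ : Z ⟶ (A⟦(1 : ℤ)⟧))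
    (hT : Triangle.mk f g δ ∈ distTriang C) :
    IsXMonic X f ↔ IsXEpic X g := by
  -- Both sides say that the form `e δ` on `A ⟶ τ Z` vanishes on morphisms factoring through `X`.
  have monic_iff : IsXMonic X f ↔ ∀ h : A ⟶ τ.obj Z, FactorsThru X h → e Z A δ h = 0 := by
    simp only [isXMonic_iff_comp_shift_map_eq_zero X hT,
      comp_shift_map_eq_zero_iff_forall_dual e he₂, FactorsThru]
    grind
  have epic_iff : IsXEpic X g ↔ ∀ h : A ⟶ τ.obj Z, FactorsThru X h → e Z A δ h = 0 := by
    simp only [isXEpic_iff_comp_eq_zero X hT, comp_eq_zero_iff_forall_dual e he₁,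
      factorsThru_iff_exists_comp_map X hτ₁ hτ₂]
    grind
  rw [monic_iff, epic_iff]

end PaperStmt
end
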